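/- arXiv:1711.05009 — 2 statements merged into one kernel-verified Lean document; each statement's English description precedes it below -/
import Mathlib

section
/- Fix n ≥ 1, q ∈ ℝⁿ, and let U belong to the sub-σ-algebra of Borel sets of ℝⁿ generated by the half-spaces {x : x_i ≥ q_i}, i = 1,…,n. Let φ be a Schwartz function on ℝⁿ. Then for each i there is a measurable function ε_i : ℝ^{n−1} → {−1, 0, 1} such that ∫_U ∂φ/∂x_i (x) dx = ∫_{Piv_i(U)} ε_i(x̃) φ(x₁,…,x_{i−1}, q_i, x_{i+1},…,xₙ) dx̃, where x̃ = (x₁,…,x_{i−1},x_{i+1},…,xₙ) and Piv_i(U) is viewed as a subset of ℝ^{n−1}. -/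
open MeasureTheory

/-- Insert the value `q` at coordinate `i`, the other coordinates being given by `x̃`. -/
noncomputable def insertCoord {n : ℕ} (i : Fin n) (q : ℝ)
    (xt : {j : Fin n // j ≠ i} → ℝ) : Fin n → ℝ :=
  fun j => if h : j = i then q else xt ⟨j, h⟩

/-- The pivotal set of `U` in direction `i`. -/
def Piv {n : ℕ} (i : Fin n) (U : Set (Fin n → ℝ)) : Set (Fin n → ℝ) :=
  {x | ∃ y₁ y₂ : ℝ, Function.update x i y₁ ∈ U ∧ Function.update x i y₂ ∉ U}

/-!
Every slice of `U` along the `i`-th axis is `∅`, `ℝ`, `(-∞, q i)` or `[q i, ∞)`: the generating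
half-spaces have this property, and it survives complements and countable unions. Along such a
line `φ` is a Schwartz function of one variable, so by the fundamental theorem of calculus `∂ᵢφ`
integrates over these four slices to `0`, `0`, `φ` and `-φ` at the point with `xᵢ = q i`. Fubini
along the `i`-th axis gives the formula; the sign vanishes off the pivotal lines.
-/

open Set Filter Topology SchwartzMap

theorem update_mem_iff_of_measurableSet_generateFrom {ι α : Type*} [DecidableEq ι] [LE α]
    {q : ι → α} {U : Set (ι → α)}
    (hU : MeasurableSet[MeasurableSpace.generateFrom {S | ∃ i, S = {x | q i ≤ x i}}] U)
    (i : ι) (x : ι → α) {y z : α} (hyz : q i ≤ y ↔ q i ≤ z) :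
    Function.update x i y ∈ U ↔ Function.update x i z ∈ U := by
  induction U, hU using MeasurableSpace.generateFrom_induction generalizing x with
  | hC t ht _ =>
    obtain ⟨j, rfl⟩ := ht
    rcases eq_or_ne j i with rfl | h
    · simpa using hyz
    · simp [Function.update_of_ne h]
  | empty => simp
  | compl t _ IH => exact not_congr (IH x)
  | iUnion s _ IH => simp only [mem_iUnion]; exact exists_congr fun k => IH k x

theorem generateFrom_setOf_le_apply_le_pi {ι : Type*} (q : ι → ℝ) :
    MeasurableSpace.generateFrom {S : Set (ι → ℝ) | ∃ i, S = {x | q i ≤ x i}} ≤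
      MeasurableSpace.pi :=
  MeasurableSpace.generateFrom_le <| by
    rintro _ ⟨i, rfl⟩
    exact measurableSet_Ici.preimage (measurable_pi_apply i)

namespace SchwartzMap

theorem integrable_deriv (g : 𝓢(ℝ, ℝ)) : Integrable (deriv g) := by
  convert (derivCLM ℝ ℝ g).integrable (μ := volume) using 1
  exact funext fun y => (derivCLM_apply ℝ g y).symm

theorem tendsto_atBot (g : 𝓢(ℝ, ℝ)) : Tendsto g atBot (𝓝 0) :=
  g.tendsto_cocompact.mono_left (cocompact_eq_atBot_atTop (α := ℝ) ▸ le_sup_left)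

theorem tendsto_atTop (g : 𝓢(ℝ, ℝ)) : Tendsto g atTop (𝓝 0) :=
  g.tendsto_cocompact.mono_left (cocompact_eq_atBot_atTop (α := ℝ) ▸ le_sup_right)

theorem integral_Iic_deriv (g : 𝓢(ℝ, ℝ)) (a : ℝ) : ∫ y in Iic a, deriv g y = g a := by
  simpa using integral_Iic_of_hasDerivAt_of_tendsto' (a := a)
    (fun y _ => g.differentiableAt.hasDerivAt) g.integrable_deriv.integrableOn g.tendsto_atBot

theorem integral_Ioi_deriv (g : 𝓢(ℝ, ℝ)) (a : ℝ) : ∫ y in Ioi a, deriv g y = -g a := by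
  simpa using integral_Ioi_of_hasDerivAt_of_tendsto' (a := a)
    (fun y _ => g.differentiableAt.hasDerivAt) g.integrable_deriv.integrableOn g.tendsto_atTop

theorem setIntegral_deriv_of_le_iff (g : 𝓢(ℝ, ℝ)) {a : ℝ} {s : Set ℝ}
    (hs : ∀ y z, (a ≤ y ↔ a ≤ z) → (y ∈ s ↔ z ∈ s)) :
    ∫ y in s, deriv g y = (s.indicator 1 (a - 1) - s.indicator 1 a) * g a := by
  have below (y) (hy : y < a) : y ∈ s ↔ a - 1 ∈ s :=
    hs _ _ ⟨fun h => absurd h (not_le.2 hy), fun _ => by linarith⟩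
  have above (y) (hy : a ≤ y) : y ∈ s ↔ a ∈ s := hs _ _ (iff_of_true hy le_rfl)
  by_cases h₁ : a - 1 ∈ s <;> by_cases h₂ : a ∈ s
  · have : s = univ := eq_univ_of_forall fun y => by
      rcases lt_or_ge y a with hy | hy
      exacts [(below y hy).2 h₁, (above y hy).2 h₂]
    rw [this, Measure.restrict_univ, ← intervalIntegral.integral_Iic_add_Ioi (b := a)
      g.integrable_deriv.integrableOn g.integrable_deriv.integrableOn, integral_Iic_deriv,
      integral_Ioi_deriv]
    simp
  · have : s = Iio a := Set.ext fun y => by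
      rcases lt_or_ge y a with hy | hy
      · simp [hy, (below y hy).2 h₁]
      · simp [not_lt.2 hy, above y hy, h₂]
    rw [this, ← integral_Iic_eq_integral_Iio, integral_Iic_deriv]
    simp
  · have : s = Ici a := Set.ext fun y => by
      rcases lt_or_ge y a with hy | hy
      · simp [not_le.2 hy, below y hy, h₁]
      · simp [hy, (above y hy).2 h₂]
    rw [this, integral_Ici_eq_integral_Ioi, integral_Ioi_deriv]
    simp
  · have : s = ∅ := eq_empty_of_forall_notMem fun y => by
      rcases lt_or_ge y a with hy | hy
      exacts [(below y hy).not.2 h₁, (above y hy).not.2 h₂]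
    simp [this]

end SchwartzMap

section InsertCoord

variable {n : ℕ} (i : Fin n)

theorem update_insertCoord (xt : {j : Fin n // j ≠ i} → ℝ) (a y : ℝ) :
    Function.update (insertCoord i a xt) i y = insertCoord i y xt := by
  funext j
  rcases eq_or_ne j i with rfl | h
  · simp [insertCoord]
  · simp [insertCoord, h]

theorem insertCoord_eq_add (xt : {j : Fin n // j ≠ i} → ℝ) :
    (insertCoord i · xt) = fun y => insertCoord i 0 xt + y • Pi.single i 1 := by
  funext y j
  rcases eq_or_ne j i with rfl | h
  · simp [insertCoord]
  · simp [insertCoord, h]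

theorem measurable_insertCoord (a : ℝ) : Measurable (insertCoord i a) :=
  measurable_pi_lambda _ fun j => by
    by_cases h : j = i
    · simp [insertCoord, h]
    · simpa [insertCoord, h] using measurable_pi_apply _

theorem continuous_insertCoord (xt : {j : Fin n // j ≠ i} → ℝ) :
    Continuous (insertCoord i · xt) := by
  rw [insertCoord_eq_add]
  fun_prop

theorem hasDerivAt_insertCoord (xt : {j : Fin n // j ≠ i} → ℝ) (y : ℝ) :
    HasDerivAt (insertCoord i · xt) (Pi.single i 1) y := by
  rw [insertCoord_eq_add]
  simpa using ((hasDerivAt_id y).smul_const (Pi.single i 1 : Fin n → ℝ)).const_add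
    (insertCoord i 0 xt)

theorem hasTemperateGrowth_insertCoord (xt : {j : Fin n // j ≠ i} → ℝ) :
    (insertCoord i · xt).HasTemperateGrowth := by
  rw [insertCoord_eq_add]
  exact (Function.HasTemperateGrowth.const _).add
    ((ContinuousLinearMap.id ℝ ℝ).smulRight (Pi.single i 1)).hasTemperateGrowth

theorem antilipschitzWith_insertCoord (xt : {j : Fin n // j ≠ i} → ℝ) :
    AntilipschitzWith 1 (insertCoord i · xt) :=
  AntilipschitzWith.of_le_mul_dist fun y z => by
    simpa [insertCoord] using dist_le_pi_dist (insertCoord i y xt) (insertCoord i z xt) i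

noncomputable def restrictInsertCoord (xt : {j : Fin n // j ≠ i} → ℝ) :
    𝓢(Fin n → ℝ, ℝ) →L[ℝ] 𝓢(ℝ, ℝ) :=
  compCLMOfAntilipschitz ℝ (hasTemperateGrowth_insertCoord i xt)
    (antilipschitzWith_insertCoord i xt)

theorem deriv_restrictInsertCoord (xt : {j : Fin n // j ≠ i} → ℝ) (φ : 𝓢(Fin n → ℝ, ℝ))
    (y : ℝ) :
    deriv (restrictInsertCoord i xt φ) y = fderiv ℝ φ (insertCoord i y xt) (Pi.single i 1) :=
  (φ.differentiableAt.hasFDerivAt.comp_hasDerivAt y (hasDerivAt_insertCoord i xt y)).deriv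

theorem integral_eq_integral_integral_insertCoord {E : Type*} [NormedAddCommGroup E]
    [NormedSpace ℝ E] {f : (Fin n → ℝ) → E} (hf : Integrable f) :
    ∫ x, f x = ∫ xt, ∫ y, f (insertCoord i y xt) := by
  have : Unique {j : Fin n // ¬j ≠ i} :=
    ⟨⟨i, not_not.2 rfl⟩, fun j => Subtype.ext (not_not.1 j.2)⟩
  let e := (MeasurableEquiv.piEquivPiSubtypeProd (fun _ : Fin n => ℝ) (· ≠ i)).trans
    ((MeasurableEquiv.refl _).prodCongr (MeasurableEquiv.funUnique _ ℝ))
  have he : MeasurePreserving e volume (volume.prod volume) := by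
    have h := volume_preserving_piEquivPiSubtypeProd (fun _ : Fin n => ℝ) (· ≠ i)
    rw [Measure.volume_eq_prod] at h
    refine ((MeasurePreserving.id _).prod ?_).comp h
    -- the two volumes differ only in the `Fintype` instance of the one-point index type
    convert volume_preserving_funUnique {j : Fin n // ¬j ≠ i} ℝ using 2 <;>
      first | rfl | (congr; exact Subsingleton.elim _ _)
  have he_symm (xt y) : e.symm (xt, y) = insertCoord i y xt := by
    funext j
    by_cases h : j = i
    · subst h; simp [e, insertCoord]; rfl
    · simp [e, insertCoord, h]; rfl
  have hfe : Integrable (fun p => f (e.symm p)) (volume.prod volume) :=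
    (he.symm.integrable_comp_emb e.symm.measurableEmbedding).2 hf
  rw [← he.symm.integral_comp' f, integral_prod _ hfe]
  simp_rw [he_symm]

theorem setIntegral_eq_integral_setIntegral_insertCoord {E : Type*} [NormedAddCommGroup E]
    [NormedSpace ℝ E] {U : Set (Fin n → ℝ)} (hU : MeasurableSet U) {f : (Fin n → ℝ) → E}
    (hf : IntegrableOn f U) :
    ∫ x in U, f x = ∫ xt, ∫ y in (insertCoord i · xt) ⁻¹' U, f (insertCoord i y xt) := by
  rw [← integral_indicator hU,
    integral_eq_integral_integral_insertCoord i (hf.integrable_indicator hU)]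
  congr 1 with xt
  rw [← integral_indicator (hU.preimage (continuous_insertCoord i xt).measurable)]
  rfl

/-- The paper's `εᵢ(x̃)`, read off the slice of `U` through `x̃` at `a - 1` and at `a`: it is `1`
if the slice is `(-∞, a)`, `-1` if it is `[a, ∞)`, and `0` if it is `∅` or `ℝ`. -/
noncomputable def pivotSign (U : Set (Fin n → ℝ)) (a : ℝ) (xt : {j : Fin n // j ≠ i} → ℝ) : ℝ :=
  U.indicator 1 (insertCoord i (a - 1) xt) - U.indicator 1 (insertCoord i a xt)

theorem measurable_pivotSign {U : Set (Fin n → ℝ)} (hU : MeasurableSet U) (a : ℝ) :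
    Measurable (pivotSign i U a) :=
  ((measurable_const.indicator hU).comp (measurable_insertCoord i _)).sub
    ((measurable_const.indicator hU).comp (measurable_insertCoord i _))

theorem pivotSign_eq_neg_one_or_zero_or_one (U : Set (Fin n → ℝ)) (a : ℝ)
    (xt : {j : Fin n // j ≠ i} → ℝ) :
    pivotSign i U a xt = -1 ∨ pivotSign i U a xt = 0 ∨ pivotSign i U a xt = 1 := by
  classical
  simp only [pivotSign, indicator_apply]
  split_ifs <;> norm_num

theorem pivotSign_eq_zero_of_notMem_piv {U : Set (Fin n → ℝ)} {a : ℝ}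
    {xt : {j : Fin n // j ≠ i} → ℝ} (h : insertCoord i a xt ∉ Piv i U) :
    pivotSign i U a xt = 0 := by
  classical
  simp only [Piv, mem_ofPred_eq, update_insertCoord, not_exists, not_and, not_not] at h
  have hmem : insertCoord i (a - 1) xt ∈ U ↔ insertCoord i a xt ∈ U := ⟨h _ _, h _ _⟩
  simp [pivotSign, indicator_apply, hmem]

theorem setIntegral_preimage_insertCoord_deriv {q : Fin n → ℝ} {U : Set (Fin n → ℝ)}
    (hU : MeasurableSet[MeasurableSpace.generateFrom {S | ∃ i, S = {x | q i ≤ x i}}] U)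
    (xt : {j : Fin n // j ≠ i} → ℝ) (φ : 𝓢(Fin n → ℝ, ℝ)) :
    ∫ y in (insertCoord i · xt) ⁻¹' U, deriv (restrictInsertCoord i xt φ) y =
      pivotSign i U (q i) xt * φ (insertCoord i (q i) xt) :=
  setIntegral_deriv_of_le_iff _ fun y z hyz => by
    simpa only [mem_preimage, update_insertCoord] using
      update_mem_iff_of_measurableSet_generateFrom hU i (insertCoord i 0 xt) hyz

end InsertCoord

theorem stmt1_general {n : ℕ} (q : Fin n → ℝ) (U : Set (Fin n → ℝ))
    (hU : MeasurableSet[MeasurableSpace.generateFrom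
      {S : Set (Fin n → ℝ) | ∃ i : Fin n, S = {x | q i ≤ x i}}] U)
    (φ : SchwartzMap (Fin n → ℝ) ℝ) (i : Fin n) :
    ∃ ε : ({j : Fin n // j ≠ i} → ℝ) → ℝ, Measurable ε ∧
      (∀ xt, ε xt = -1 ∨ ε xt = 0 ∨ ε xt = 1) ∧
      ∫ x in U, fderiv ℝ (φ : (Fin n → ℝ) → ℝ) x (Pi.single i 1) =
        ∫ xt in {xt | insertCoord i (q i) xt ∈ Piv i U},
          ε xt * φ (insertCoord i (q i) xt) := by
  have hUm : MeasurableSet U := generateFrom_setOf_le_apply_le_pi q U hU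
  have hD : Integrable fun x => fderiv ℝ φ x (Pi.single i 1) :=
    (LineDeriv.lineDerivOp (Pi.single i 1 : Fin n → ℝ) φ).integrable
  refine ⟨pivotSign i U (q i), measurable_pivotSign i hUm _,
    pivotSign_eq_neg_one_or_zero_or_one i U _, ?_⟩
  calc ∫ x in U, fderiv ℝ φ x (Pi.single i 1)
      = ∫ xt, ∫ y in (insertCoord i · xt) ⁻¹' U, deriv (restrictInsertCoord i xt φ) y := by
        simp_rw [setIntegral_eq_integral_setIntegral_insertCoord i hUm hD.integrableOn,
          deriv_restrictInsertCoord]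
    _ = ∫ xt, pivotSign i U (q i) xt * φ (insertCoord i (q i) xt) := by
        simp_rw [setIntegral_preimage_insertCoord_deriv i hU]
    _ = _ := (setIntegral_eq_integral_of_forall_compl_eq_zero fun xt hxt => by
        rw [pivotSign_eq_zero_of_notMem_piv i hxt, zero_mul]).symm

theorem stmt1 {n : ℕ} (hn : 1 ≤ n) (q : Fin n → ℝ) (U : Set (Fin n → ℝ))
    (hU : MeasurableSet[MeasurableSpace.generateFrom
      {S : Set (Fin n → ℝ) | ∃ i : Fin n, S = {x | q i ≤ x i}}] U)
    (φ : SchwartzMap (Fin n → ℝ) ℝ) (i : Fin n) :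
    ∃ ε : ({j : Fin n // j ≠ i} → ℝ) → ℝ, Measurable ε ∧
      (∀ xt, ε xt = -1 ∨ ε xt = 0 ∨ ε xt = 1) ∧
      ∫ x in U, fderiv ℝ (φ : (Fin n → ℝ) → ℝ) x (Pi.single i 1) =
        ∫ xt in {xt | insertCoord i (q i) xt ∈ Piv i U},
          ε xt * φ (insertCoord i (q i) xt) :=
  stmt1_general q U hU φ i
end

section
/- Let Γ(Σ, x) = (2π)^{−n/2} det(Σ)^{−1/2} exp(−½ xᵀ Σ^{−1} x) be the density at x ∈ ℝⁿ of a centered Gaussian vector with positive definite covariance matrix Σ. Then for every pair of indices 1 ≤ i < j ≤ n, the partial derivative of Γ with respect to the off-diagonal entry Σ_{ij} equals the second partial derivative ∂²Γ/∂x_i∂x_j. -/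
open Matrix

/-- The density at `x` of a centered Gaussian vector with covariance matrix `S`. -/
noncomputable def gaussDensity {n : ℕ} (S : Matrix (Fin n) (Fin n) ℝ)
    (x : Fin n → ℝ) : ℝ :=
  (Real.sqrt ((2 * Real.pi) ^ n * S.det))⁻¹ *
    Real.exp (-(1 / 2) * (x ⬝ᵥ (S⁻¹ *ᵥ x)))

/-!
Both sides equal `Γ(Σ, x) * ((Σ⁻¹ x)ᵢ (Σ⁻¹ x)ⱼ - (Σ⁻¹)ᵢⱼ)`.

In `x`, the directional derivative is `∂ᵤ Γ = -(u ⬝ Σ⁻¹ x) Γ`; differentiating once more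
gives `∂ᵥ ∂ᵤ Γ = ((u ⬝ Σ⁻¹ x)(v ⬝ Σ⁻¹ x) - u ⬝ Σ⁻¹ v) Γ`.

In `Σ`, along the line `Σ + t E`, Jacobi's formula `(det)' = det Σ · tr (Σ⁻¹ E)` and
`(Σ⁻¹)' = -Σ⁻¹ E Σ⁻¹` give the logarithmic derivative `(x ⬝ Σ⁻¹ E Σ⁻¹ x - tr (Σ⁻¹ E)) / 2`.
For `E = eᵢⱼ + eⱼᵢ` and symmetric `Σ⁻¹` this is `(Σ⁻¹ x)ᵢ (Σ⁻¹ x)ⱼ - (Σ⁻¹)ᵢⱼ`.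
-/

open Polynomial

section LineDerivatives

variable {𝕜 ι : Type*} [NontriviallyNormedField 𝕜] [Fintype ι]

theorem hasLineDerivAt_dotProduct_mulVec (u : ι → 𝕜) (A : Matrix ι ι 𝕜) (x v : ι → 𝕜) :
    HasLineDerivAt 𝕜 (fun y => u ⬝ᵥ A *ᵥ y) (u ⬝ᵥ A *ᵥ v) x v := by
  have hline : (fun t : 𝕜 => u ⬝ᵥ A *ᵥ (x + t • v)) =
      fun t => u ⬝ᵥ A *ᵥ x + t * u ⬝ᵥ A *ᵥ v := by
    ext t
    simp only [mulVec_add, mulVec_smul, dotProduct_add, dotProduct_smul, smul_eq_mul]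
  unfold HasLineDerivAt
  rw [hline]
  simpa using ((hasDerivAt_id (0 : 𝕜)).mul_const (u ⬝ᵥ A *ᵥ v)).const_add (u ⬝ᵥ A *ᵥ x)

theorem hasLineDerivAt_dotProduct_mulVec_self (A : Matrix ι ι 𝕜) (x v : ι → 𝕜) :
    HasLineDerivAt 𝕜 (fun y => y ⬝ᵥ A *ᵥ y) (v ⬝ᵥ (A + Aᵀ) *ᵥ x) x v := by
  have hline : (fun t : 𝕜 => (x + t • v) ⬝ᵥ A *ᵥ (x + t • v)) = fun t =>
      x ⬝ᵥ A *ᵥ x + t * (v ⬝ᵥ (A + Aᵀ) *ᵥ x) + t ^ 2 * v ⬝ᵥ A *ᵥ v := by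
    ext t
    rw [add_mulVec, dotProduct_add, mulVec_transpose, dotProduct_comm v (x ᵥ* A),
      ← dotProduct_mulVec]
    simp only [mulVec_add, mulVec_smul, dotProduct_add, add_dotProduct, dotProduct_smul,
      smul_dotProduct, smul_eq_mul]
    ring
  unfold HasLineDerivAt
  rw [hline]
  simpa using (((hasDerivAt_id (0 : 𝕜)).mul_const _).const_add _).fun_add
    ((hasDerivAt_pow 2 (0 : 𝕜)).mul_const (v ⬝ᵥ A *ᵥ v))

end LineDerivatives

section SpatialDerivatives

variable {n : ℕ} {S : Matrix (Fin n) (Fin n) ℝ}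

theorem differentiable_gaussDensity (S : Matrix (Fin n) (Fin n) ℝ) :
    Differentiable ℝ (gaussDensity S) := by
  unfold gaussDensity dotProduct mulVec dotProduct
  fun_prop

theorem hasLineDerivAt_gaussDensity (hS : S.IsSymm) (x v : Fin n → ℝ) :
    HasLineDerivAt ℝ (gaussDensity S) (-(v ⬝ᵥ S⁻¹ *ᵥ x) * gaussDensity S x) x v := by
  have hquad := hasLineDerivAt_dotProduct_mulVec_self S⁻¹ x v
  rw [hS.inv.eq, add_mulVec, dotProduct_add] at hquad
  refine (((hquad.const_mul (-(1 / 2) : ℝ)).exp).const_mul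
    (Real.sqrt ((2 * Real.pi) ^ n * S.det))⁻¹).congr_deriv ?_
  simp only [zero_smul, add_zero, gaussDensity]
  ring

theorem fderiv_gaussDensity_apply (hS : S.IsSymm) (x v : Fin n → ℝ) :
    fderiv ℝ (gaussDensity S) x v = -(v ⬝ᵥ S⁻¹ *ᵥ x) * gaussDensity S x :=
  ((differentiable_gaussDensity S x).hasFDerivAt.hasLineDerivAt v).unique
    (hasLineDerivAt_gaussDensity hS x v)

theorem fderiv_fderiv_gaussDensity_apply (hS : S.IsSymm) (x u v : Fin n → ℝ) :
    fderiv ℝ (fun y => fderiv ℝ (gaussDensity S) y u) x v =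
      ((u ⬝ᵥ S⁻¹ *ᵥ x) * (v ⬝ᵥ S⁻¹ *ᵥ x) - u ⬝ᵥ S⁻¹ *ᵥ v) * gaussDensity S x := by
  simp_rw [fderiv_gaussDensity_apply hS]
  have hdiff : DifferentiableAt ℝ (fun y => -(u ⬝ᵥ S⁻¹ *ᵥ y) * gaussDensity S y) x := by
    have hgauss := differentiable_gaussDensity S x
    unfold dotProduct mulVec dotProduct
    fun_prop
  refine (hdiff.hasFDerivAt.hasLineDerivAt v).unique ?_
  have hlin := hasLineDerivAt_dotProduct_mulVec u S⁻¹ x v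
  refine (hlin.fun_neg.fun_mul (hasLineDerivAt_gaussDensity hS x v)).congr_deriv ?_
  simp only [zero_smul, add_zero]
  ring

end SpatialDerivatives

theorem eval_det_one_add_X_smul {R ι : Type*} [CommRing R] [Fintype ι] [DecidableEq ι]
    (M : Matrix ι ι R) (t : R) :
    (det (1 + (X : R[X]) • M.map C)).eval t = det (1 + t • M) := by
  simp [eval_det, ← smul_eq_mul_diagonal]

theorem hasDerivAt_det_add_smul {𝕜 ι : Type*} [NontriviallyNormedField 𝕜] [Fintype ι]
    [DecidableEq ι] {S : Matrix ι ι 𝕜} (hS : IsUnit S.det) (E : Matrix ι ι 𝕜) :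
    HasDerivAt (fun t : 𝕜 => (S + t • E).det) (S.det * trace (S⁻¹ * E)) 0 := by
  have hfactor : ∀ t : 𝕜, S + t • E = S * (1 + t • (S⁻¹ * E)) := fun t => by
    rw [Matrix.mul_add, Matrix.mul_one, Matrix.mul_smul, ← Matrix.mul_assoc,
      mul_nonsing_inv _ hS, Matrix.one_mul]
  have heval := fun t => (eval_det_one_add_X_smul (S⁻¹ * E) t).symm
  simp_rw [hfactor, det_mul, heval]
  have := ((det (1 + (X : 𝕜[X]) • (S⁻¹ * E).map C)).hasDerivAt 0).const_mul S.det
  rwa [derivative_det_one_add_X_smul] at this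

-- Any norm on matrices would do: it only serves to apply `hasFDerivAt_ringInverse`.
attribute [local instance] Matrix.linftyOpNormedRing Matrix.linftyOpNormedAlgebra in
theorem hasDerivAt_dotProduct_inv_add_smul_mulVec {𝕜 ι : Type*} [RCLike 𝕜] [Fintype ι]
    [DecidableEq ι] {S : Matrix ι ι 𝕜} (hS : IsUnit S.det) (E : Matrix ι ι 𝕜) (u w : ι → 𝕜) :
    HasDerivAt (fun t : 𝕜 => u ⬝ᵥ (S + t • E)⁻¹ *ᵥ w) (-(u ⬝ᵥ (S⁻¹ * E * S⁻¹) *ᵥ w)) 0 := by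
  have hu : IsUnit S := (isUnit_iff_isUnit_det S).2 hS
  have hline : HasDerivAt (fun t : 𝕜 => S + t • E) E 0 :=
    (((hasDerivAt_id (0 : 𝕜)).smul_const E).const_add S).congr_deriv (one_smul _ _)
  have hinv : HasDerivAt (fun t : 𝕜 => (S + t • E)⁻¹) (-(S⁻¹ * E * S⁻¹)) 0 := by
    have hcomp := (hasFDerivAt_ringInverse (𝕜 := 𝕜) hu.unit).comp_hasDerivAt_of_eq
      (0 : 𝕜) hline (by simp)
    rw [show (fun t : 𝕜 => (S + t • E)⁻¹) = Ring.inverse ∘ fun t => S + t • E from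
      funext fun t => nonsing_inv_eq_ringInverse _]
    refine hcomp.congr_deriv ?_
    simp [nonsing_inv_eq_ringInverse]
  let L : Matrix ι ι 𝕜 →ₗ[𝕜] 𝕜 :=
    LinearMap.applyₗ w ∘ₗ LinearMap.applyₗ u ∘ₗ (toLinearMap₂' 𝕜 : Matrix ι ι 𝕜 ≃ₗ[𝕜] _).toLinearMap
  have hL : ∀ M, L.toContinuousLinearMap M = u ⬝ᵥ M *ᵥ w := fun M => toLinearMap₂'_apply' M u w
  have h := L.toContinuousLinearMap.hasFDerivAt.comp_hasDerivAt (0 : 𝕜) hinv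
  simp only [Function.comp_def, hL] at h
  exact h.congr_deriv ((hL _).trans (by rw [neg_mulVec, dotProduct_neg]))

theorem HasDerivAt.inv_sqrt {f : ℝ → ℝ} {f' t : ℝ} (hf : HasDerivAt f f' t) (ht : 0 < f t) :
    HasDerivAt (fun s => (√(f s))⁻¹) (-(f' / (2 * f t)) * (√(f t))⁻¹) t := by
  have hsqrt : 0 < √(f t) := Real.sqrt_pos.2 ht
  refine ((hf.sqrt ht.ne').inv hsqrt.ne').congr_deriv ?_
  rw [Real.sq_sqrt ht.le]
  field_simp

theorem hasDerivAt_gaussDensity_add_smul {n : ℕ} {S : Matrix (Fin n) (Fin n) ℝ} (hS : 0 < S.det)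
    (E : Matrix (Fin n) (Fin n) ℝ) (x : Fin n → ℝ) :
    HasDerivAt (fun t : ℝ => gaussDensity (S + t • E) x)
      ((x ⬝ᵥ (S⁻¹ * E * S⁻¹) *ᵥ x - trace (S⁻¹ * E)) / 2 * gaussDensity S x) 0 := by
  have hpos : 0 < (2 * Real.pi) ^ n * (S + (0 : ℝ) • E).det := by
    rw [zero_smul, add_zero]
    positivity
  have hnorm :=
    ((hasDerivAt_det_add_smul hS.ne'.isUnit E).const_mul ((2 * Real.pi) ^ n)).inv_sqrt hpos
  have hexp := ((hasDerivAt_dotProduct_inv_add_smul_mulVec hS.ne'.isUnit E x x).const_mul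
    (-(1 / 2) : ℝ)).exp
  refine (hnorm.fun_mul hexp).congr_deriv ?_
  simp only [zero_smul, add_zero, gaussDensity]
  field_simp
  ring

namespace Matrix.IsSymm

variable {R ι : Type*} [CommRing R] [Fintype ι] [DecidableEq ι] {A : Matrix ι ι R}

theorem trace_mul_single_add_single (hA : A.IsSymm) (i j : ι) :
    trace (A * (single i j 1 + single j i 1)) = 2 * A i j := by
  rw [Matrix.mul_add, trace_add, trace_mul_single, trace_mul_single, hA.apply]
  simp [two_mul]

theorem dotProduct_mul_single_add_single_mul_mulVec (hA : A.IsSymm) (x : ι → R) (i j : ι) :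
    x ⬝ᵥ (A * (single i j 1 + single j i 1) * A) *ᵥ x = 2 * ((A *ᵥ x) i * (A *ᵥ x) j) := by
  rw [← mulVec_mulVec, ← mulVec_mulVec, dotProduct_mulVec, ← mulVec_transpose, hA.eq,
    add_mulVec, single_mulVec, single_mulVec, dotProduct_add]
  simp only [dotProduct, one_mul, Function.update_apply, Pi.zero_apply, mul_ite, mul_zero,
    Finset.sum_ite_eq', Finset.mem_univ, ↓reduceIte]
  ring

end Matrix.IsSymm

theorem stmt2_general {n : ℕ} (i j : Fin n)
    (S : Matrix (Fin n) (Fin n) ℝ) (hS : S.PosDef) (x : Fin n → ℝ) :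
    deriv (fun t : ℝ => gaussDensity
        (S + t • (Matrix.single i j 1 + Matrix.single j i 1)) x) 0 =
      fderiv ℝ (fun y => fderiv ℝ (fun z => gaussDensity S z) y (Pi.single i 1)) x
        (Pi.single j 1) := by
  have hSymm : S.IsSymm := isHermitian_iff_isSymm.1 hS.isHermitian
  have hSymmInv : S⁻¹.IsSymm := hSymm.inv
  rw [(hasDerivAt_gaussDensity_add_smul hS.det_pos (single i j 1 + single j i 1) x).deriv,
    fderiv_fderiv_gaussDensity_apply hSymm, hSymmInv.trace_mul_single_add_single,
    hSymmInv.dotProduct_mul_single_add_single_mul_mulVec]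
  simp only [single_dotProduct, one_mul, mulVec_single_one, col_apply]
  ring

theorem stmt2 {n : ℕ} (i j : Fin n) (hij : i < j)
    (S : Matrix (Fin n) (Fin n) ℝ) (hS : S.PosDef) (x : Fin n → ℝ) :
    deriv (fun t : ℝ => gaussDensity
        (S + t • (Matrix.single i j 1 + Matrix.single j i 1)) x) 0 =
      fderiv ℝ (fun y => fderiv ℝ (fun z => gaussDensity S z) y (Pi.single i 1)) x
        (Pi.single j 1) :=
  stmt2_general i j S hS x
end
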